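/- arXiv:1711.01366 — 5 statements merged into one kernel-verified Lean document; each statement's English description precedes it below -/
import Mathlib

section
/- Let n ≥ 0 be a real constant and let P > 0 be a real constant. For i = 1, 2, let α_i : [t_i⁰, ∞) → (0, α_i⁰] be continuous bijections (for some t_i⁰ > 0 and α_i⁰ ∈ (0,1)) such that α_i(t) = t^n e^{−t} (1 + o(1)) as t → +∞, i.e. α_i(t)/(t^n e^{−t}) → 1. For t₁ ≥ t₁⁰ large, let t₂ = t₂(t₁) be determined by the constraint ln α₂(t₂) = P² · ln α₁(t₁) (equivalently √(ln α₂(t₂)/ln α₁(t₁)) = P). Then, as t₁ → +∞, e^{√(t₁ t₂)} is asymptotically equivalent to α₁(t₁)^{−P} · ( (−ln α₁(t₁))^{P} · (−ln α₂(t₂))^{1/P} )^{n/2}, i.e. the ratio of the two quantities tends to 1. -/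
/-!
Write `Lᵢ = -log αᵢ`. The hypothesis on `αᵢ` says `Lᵢ(t) = t - n log t + o(1)`, so `Lᵢ(t) ∼ t`,
`t - Lᵢ(t) - n log Lᵢ(t) → 0` and, since `t - Lᵢ(t) = O(log t) = o(√t)`, also `√t - √Lᵢ(t) → 0`.
Moreover `t₂ → ∞`, because `L₂` is bounded on compact subsets of `[t₂⁰, ∞)` while
`L₂(t₂) = P² L₁(t₁) → ∞`. The logarithm of the ratio is
`√(t₁t₂) - P L₁ - (n/2)(P log L₁ + log L₂ / P)`, and as `√L₂ = P √L₁` the exact identity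
`√(t₁t₂) - P L₁ = P/2 (t₁ - L₁) + (t₂ - L₂)/(2P) - (P (√t₁ - √L₁) - (√t₂ - √L₂))² / (2P)`
writes it in terms of these vanishing quantities.
-/

open Real Filter Topology Asymptotics Set

lemma abs_sub_le_of_abs_sq_sub_sq_le {a b c : ℝ} (ha : 0 ≤ a) (hb : 0 ≤ b) (hc : 0 ≤ c)
    (h : |a ^ 2 - b ^ 2| ≤ c * a) : |a - b| ≤ c := by
  rcases (add_nonneg ha hb).eq_or_lt with hab | hab
  · rw [show a = 0 by linarith, show b = 0 by linarith]
    simpa using hc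
  · refine le_of_mul_le_mul_right ?_ hab
    calc |a - b| * (a + b) = |a ^ 2 - b ^ 2| := by
          rw [← abs_of_pos hab, ← abs_mul]; ring_nf
      _ ≤ c * (a + b) := h.trans (by nlinarith)

lemma tendsto_atTop_of_tendsto_comp_of_continuousOn {ι : Type*} {l : Filter ι} {f : ι → ℝ}
    {g : ℝ → ℝ} {a : ℝ} (hg : ContinuousOn g (Ici a)) (hf : ∀ᶠ x in l, f x ∈ Ici a)
    (hgf : Tendsto (g ∘ f) l atTop) : Tendsto f l atTop := by
  refine tendsto_atTop.2 fun M => ?_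
  obtain ⟨C, hC⟩ := (isCompact_Icc (a := a) (b := M) |>.image_of_continuousOn
    (hg.mono Icc_subset_Ici_self)).bddAbove
  filter_upwards [hf, hgf.eventually_gt_atTop C] with x hfx hgfx
  by_contra! hlt
  exact (hC (mem_image_of_mem g ⟨hfx, hlt.le⟩)).not_gt hgfx

lemma tendsto_sqrt_sub_sqrt_of_isLittleO {ι : Type*} {l : Filter ι} {u v : ι → ℝ}
    (hu : ∀ᶠ x in l, 0 ≤ u x) (hv : ∀ᶠ x in l, 0 ≤ v x)
    (h : (fun x => u x - v x) =o[l] fun x => √(u x)) :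
    Tendsto (fun x => √(u x) - √(v x)) l (𝓝 0) := by
  rw [← isLittleO_one_iff ℝ]
  refine IsLittleO.of_bound fun c hc => ?_
  filter_upwards [h.bound hc, hu, hv] with x hx hux hvx
  rw [norm_one, mul_one, Real.norm_eq_abs]
  rw [Real.norm_eq_abs, Real.norm_eq_abs, abs_of_nonneg (sqrt_nonneg _),
    ← sq_sqrt hux, ← sq_sqrt hvx] at hx
  exact abs_sub_le_of_abs_sq_sub_sq_le (sqrt_nonneg _) (sqrt_nonneg _) hc.le (by simpa using hx)

section
variable {n : ℝ} {L : ℝ → ℝ}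

lemma isBigO_log_of_tendsto_sub_log
    (hL : Tendsto (fun t => L t - (t - n * log t)) atTop (𝓝 0)) :
    (fun t => t - L t) =O[atTop] log := by
  have h := (isBigO_refl log atTop).const_mul_left n |>.sub
    ((hL.isBigO_one ℝ).trans isLittleO_const_log_atTop.isBigO)
  exact h.congr_left fun t => by ring

lemma isEquivalent_id_of_tendsto_sub_log
    (hL : Tendsto (fun t => L t - (t - n * log t)) atTop (𝓝 0)) : L ~[atTop] id :=
  ((isBigO_log_of_tendsto_sub_log hL).trans_isLittleO isLittleO_log_id_atTop).neg_left.congr_left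
    fun t => by simp

lemma tendsto_atTop_of_tendsto_sub_log
    (hL : Tendsto (fun t => L t - (t - n * log t)) atTop (𝓝 0)) : Tendsto L atTop atTop :=
  (isEquivalent_id_of_tendsto_sub_log hL).symm.tendsto_atTop tendsto_id

lemma tendsto_log_sub_log_of_tendsto_sub_log
    (hL : Tendsto (fun t => L t - (t - n * log t)) atTop (𝓝 0)) :
    Tendsto (fun t => log (L t) - log t) atTop (𝓝 0) := by
  have hdiv := (isEquivalent_iff_tendsto_one (eventually_ne_atTop 0)).1
    (isEquivalent_id_of_tendsto_sub_log hL)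
  have hLpos := (tendsto_atTop_of_tendsto_sub_log hL).eventually_gt_atTop 0
  simpa using ((continuousAt_log one_ne_zero).tendsto.comp hdiv).congr' <| by
    filter_upwards [hLpos, eventually_gt_atTop 0] with t hLt ht
    exact log_div hLt.ne' ht.ne'

lemma tendsto_sub_sub_log_of_tendsto_sub_log
    (hL : Tendsto (fun t => L t - (t - n * log t)) atTop (𝓝 0)) :
    Tendsto (fun t => t - L t - n * log (L t)) atTop (𝓝 0) := by
  simpa using (hL.add ((tendsto_log_sub_log_of_tendsto_sub_log hL).const_mul n)).neg.congr
    fun t => by ring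

lemma tendsto_sqrt_sub_sqrt_of_tendsto_sub_log
    (hL : Tendsto (fun t => L t - (t - n * log t)) atTop (𝓝 0)) :
    Tendsto (fun t => √t - √(L t)) atTop (𝓝 0) := by
  refine tendsto_sqrt_sub_sqrt_of_isLittleO (eventually_ge_atTop 0)
    ((tendsto_atTop_of_tendsto_sub_log hL).eventually_ge_atTop 0) ?_
  refine (isBigO_log_of_tendsto_sub_log hL).trans_isLittleO ?_
  exact (isLittleO_log_rpow_atTop one_half_pos).congr_right fun t => by simp [sqrt_eq_rpow]

end

lemma eventually_pos_of_tendsto_div_rpow_mul_exp {n : ℝ} {α : ℝ → ℝ}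
    (h : Tendsto (fun t => α t / (t ^ n * exp (-t))) atTop (𝓝 1)) : ∀ᶠ t in atTop, 0 < α t :=
  (isEquivalent_of_tendsto_one h).eventually_pos <| by
    filter_upwards [eventually_gt_atTop 0] with t ht
    positivity

lemma tendsto_neg_log_sub_of_tendsto_div_rpow_mul_exp {n : ℝ} {α : ℝ → ℝ}
    (h : Tendsto (fun t => α t / (t ^ n * exp (-t))) atTop (𝓝 1)) :
    Tendsto (fun t => -log (α t) - (t - n * log t)) atTop (𝓝 0) := by
  simpa using ((continuousAt_log one_ne_zero).tendsto.comp h).neg.congr' <| by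
    filter_upwards [eventually_pos_of_tendsto_div_rpow_mul_exp h, eventually_gt_atTop 0]
      with t hα ht
    rw [Function.comp_apply, log_div hα.ne' (by positivity),
      log_mul (by positivity) (exp_ne_zero _), log_rpow ht, log_exp]
    ring

lemma sqrt_mul_sub_mul_eq {P t s L₁ L₂ : ℝ} (hP : 0 < P) (ht : 0 ≤ t) (hs : 0 ≤ s)
    (hL₂ : L₂ = P ^ 2 * L₁) :
    √(t * s) - P * L₁ = P / 2 * (t - L₁) + (s - L₂) / (2 * P)
      - (P * (√t - √L₁) - (√s - √L₂)) ^ 2 / (2 * P) := by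
  have hsqrt : √L₂ = P * √L₁ := by rw [hL₂, sqrt_mul (sq_nonneg P), sqrt_sq hP.le]
  rw [sqrt_mul ht, hsqrt, hL₂]
  field_simp
  linear_combination P ^ 2 * sq_sqrt ht + sq_sqrt hs

lemma exp_div_rpow_mul_rpow_eq {x a L₁ L₂ P m : ℝ} (ha : 0 < a) (hL₁ : 0 < L₁) (hL₂ : 0 < L₂) :
    exp x / (a ^ (-P) * (L₁ ^ P * L₂ ^ (1 / P)) ^ m)
      = exp (x + P * log a - m * (P * log L₁ + 1 / P * log L₂)) := by
  rw [rpow_def_of_pos ha, rpow_def_of_pos (by positivity), log_mul (by positivity) (by positivity),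
    log_rpow hL₁, log_rpow hL₂, ← exp_add, ← exp_sub]
  ring_nf

theorem exp_sqrt_mul_asymptotic_general (n P : ℝ) (hP : 0 < P)
    (t₂0 a₂0 : ℝ)
    (α₁ α₂ : ℝ → ℝ)
    (hcont₂ : ContinuousOn α₂ (Set.Ici t₂0))
    (hbij₂ : Set.BijOn α₂ (Set.Ici t₂0) (Set.Ioc 0 a₂0))
    (hasymp₁ : Tendsto (fun t => α₁ t / (t ^ n * Real.exp (-t))) atTop (nhds 1))
    (hasymp₂ : Tendsto (fun t => α₂ t / (t ^ n * Real.exp (-t))) atTop (nhds 1))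
    (t₂f : ℝ → ℝ)
    (ht₂f : ∀ᶠ t₁ in atTop, t₂f t₁ ∈ Set.Ici t₂0 ∧
      Real.log (α₂ (t₂f t₁)) = P ^ 2 * Real.log (α₁ t₁)) :
    Tendsto
      (fun t₁ : ℝ =>
        Real.exp (Real.sqrt (t₁ * t₂f t₁)) /
          (α₁ t₁ ^ (-P) *
            ((-Real.log (α₁ t₁)) ^ P * (-Real.log (α₂ (t₂f t₁))) ^ (1 / P)) ^ (n / 2)))
      atTop (nhds 1) := by
  have hL₁ := tendsto_neg_log_sub_of_tendsto_div_rpow_mul_exp hasymp₁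
  have hL₂ := tendsto_neg_log_sub_of_tendsto_div_rpow_mul_exp hasymp₂
  have hL₁top : Tendsto (fun t => -log (α₁ t)) atTop atTop :=
    tendsto_atTop_of_tendsto_sub_log hL₁
  have hL₂L₁ : ∀ᶠ t in atTop, -log (α₂ (t₂f t)) = P ^ 2 * -log (α₁ t) :=
    ht₂f.mono fun t h => by rw [h.2]; ring
  have ht₂ : Tendsto t₂f atTop atTop :=
    tendsto_atTop_of_tendsto_comp_of_continuousOn (g := fun t => -log (α₂ t))
      (hcont₂.log fun t ht => (hbij₂.mapsTo ht).1.ne').neg (ht₂f.mono fun _ h => h.1)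
      ((hL₁top.const_mul_atTop (pow_pos hP 2)).congr' (hL₂L₁.mono fun _ h => h.symm))
  have hG := (((tendsto_sub_sub_log_of_tendsto_sub_log hL₁).const_mul (P / 2)).add
    (((tendsto_sub_sub_log_of_tendsto_sub_log hL₂).comp ht₂).div_const (2 * P))).sub
    ((((tendsto_sqrt_sub_sqrt_of_tendsto_sub_log hL₁).const_mul P).sub
      ((tendsto_sqrt_sub_sqrt_of_tendsto_sub_log hL₂).comp ht₂)).pow 2 |>.div_const (2 * P))
  have hexpG := (continuous_exp.tendsto _).comp hG
  rw [show P / 2 * 0 + 0 / (2 * P) - (P * 0 - 0) ^ 2 / (2 * P) = 0 by ring, exp_zero] at hexpG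
  refine hexpG.congr' ?_
  filter_upwards [eventually_pos_of_tendsto_div_rpow_mul_exp hasymp₁, hL₁top.eventually_gt_atTop 0,
    eventually_ge_atTop 0, ht₂.eventually_ge_atTop 0, hL₂L₁] with t hα₁ hL₁t ht ht₂t hL₂t
  have hL₂pos : 0 < -log (α₂ (t₂f t)) := hL₂t ▸ by positivity
  rw [exp_div_rpow_mul_rpow_eq hα₁ hL₁t hL₂pos]
  simp only [Function.comp_apply]
  congr 1
  linear_combination -sqrt_mul_sub_mul_eq hP ht ht₂t hL₂t

/-- Lemma 2 of the paper. If `α_i(t) ∼ t^n e^(-t)` as `t → ∞` and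
`t₂ = t₂(t₁)` is chosen so that `ln α₂(t₂) = P² · ln α₁(t₁)`, then
`e^(√(t₁t₂)) ∼ α₁(t₁)^(-P) ((-ln α₁(t₁))^P (-ln α₂(t₂))^(1/P))^(n/2)` as `t₁ → ∞`. -/
theorem exp_sqrt_mul_asymptotic (n P : ℝ) (hn : 0 ≤ n) (hP : 0 < P)
    (t₁0 t₂0 a₁0 a₂0 : ℝ) (ht₁0 : 0 < t₁0) (ht₂0 : 0 < t₂0)
    (ha₁0 : a₁0 ∈ Set.Ioo (0 : ℝ) 1) (ha₂0 : a₂0 ∈ Set.Ioo (0 : ℝ) 1)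
    (α₁ α₂ : ℝ → ℝ)
    (hcont₁ : ContinuousOn α₁ (Set.Ici t₁0))
    (hbij₁ : Set.BijOn α₁ (Set.Ici t₁0) (Set.Ioc 0 a₁0))
    (hcont₂ : ContinuousOn α₂ (Set.Ici t₂0))
    (hbij₂ : Set.BijOn α₂ (Set.Ici t₂0) (Set.Ioc 0 a₂0))
    (hasymp₁ : Tendsto (fun t => α₁ t / (t ^ n * Real.exp (-t))) atTop (nhds 1))
    (hasymp₂ : Tendsto (fun t => α₂ t / (t ^ n * Real.exp (-t))) atTop (nhds 1))
    (t₂f : ℝ → ℝ)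
    (ht₂f : ∀ᶠ t₁ in atTop, t₂f t₁ ∈ Set.Ici t₂0 ∧
      Real.log (α₂ (t₂f t₁)) = P ^ 2 * Real.log (α₁ t₁)) :
    Tendsto
      (fun t₁ : ℝ =>
        Real.exp (Real.sqrt (t₁ * t₂f t₁)) /
          (α₁ t₁ ^ (-P) *
            ((-Real.log (α₁ t₁)) ^ P * (-Real.log (α₂ (t₂f t₁))) ^ (1 / P)) ^ (n / 2)))
      atTop (nhds 1) :=
  exp_sqrt_mul_asymptotic_general n P hP t₂0 a₂0 α₁ α₂ hcont₂ hbij₂ hasymp₁ hasymp₂ t₂f ht₂f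
end

section
/- Let c ∈ (0,1), let ρ satisfy c < ρ < 1/c, and let δ ≥ −1/2 be real. For λ > 0 define I₂(λ) := ∫₁^∞ ∫₁^∞ e^{−λ(t₁² − 2cρ t₁ t₂ + ρ² t₂²)} · (t₁ t₂)^{δ + 1/2} dt₁ dt₂. Then 4 λ² ρ (ρ−c)(1−cρ) · e^{λ(ρ² − 2cρ + 1)} · I₂(λ) → 1 as λ → +∞. -/
/-!
Substituting `tᵢ = 1 + uᵢ / λ` moves the corner `(1, 1)`, where the quadratic form `Q` is
smallest on the quadrant, to the origin: since
`Q(1 + u₁, 1 + u₂) = Q(1, 1) + a u₁ + b u₂ + Q(u₁, u₂)` with `a = 2(1 - cρ)`, `b = 2ρ(ρ - c)`,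
the product `λ² e^{λ Q(1,1)} I₂(λ)` is the integral of `e^{-a u₁ - b u₂}` against the factor
`e^{-Q(u)/λ} ((1 + u₁/λ)(1 + u₂/λ))^{δ+1/2}`. For `λ ≥ 1` this factor is bounded by a polynomial
weight and it tends to `1`, so dominated convergence gives the limit `1 / (a b)`.
-/

open Real Filter MeasureTheory Set Asymptotics Topology

theorem integral_Ioi_one_eq_inv_smul_integral_Ioi_zero {E : Type*} [NormedAddCommGroup E]
    [NormedSpace ℝ E] (g : ℝ → E) {lam : ℝ} (hlam : 0 < lam) :
    ∫ t in Ioi 1, g t = lam⁻¹ • ∫ x in Ioi 0, g (1 + x / lam) := by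
  have hshift : ∫ x in Ioi 0, g (x + 1) = ∫ t in Ioi 1, g t := by
    have h := (measurePreserving_add_right (volume : Measure ℝ) 1).setIntegral_preimage_emb
      (MeasurableEquiv.addRight (1 : ℝ)).measurableEmbedding g (Ioi 1)
    rwa [show (· + (1 : ℝ)) ⁻¹' Ioi 1 = Ioi 0 by ext; simp] at h
  simp_rw [div_eq_mul_inv, add_comm (1 : ℝ)]
  rw [integral_comp_mul_right_Ioi (fun y => g (y + 1)) 0 (inv_pos.mpr hlam), zero_mul, hshift,
    inv_inv, smul_smul, inv_mul_cancel₀ hlam.ne', one_smul]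

theorem integral_Ioi_zero_exp_neg_mul {a : ℝ} (ha : 0 < a) :
    ∫ x in Ioi 0, exp (-(a * x)) = a⁻¹ := by
  have h := integral_exp_mul_Ioi (neg_neg_of_pos ha) 0
  simp_rw [neg_mul] at h
  rw [h, mul_zero, neg_zero, exp_zero, neg_div_neg_eq, one_div]

theorem integrableOn_Ioi_zero_exp_neg_mul_mul_one_add_rpow {a : ℝ} (ha : 0 < a) (q : ℝ) :
    IntegrableOn (fun x => exp (-(a * x)) * (1 + x) ^ q) (Ioi 0) := by
  refine integrable_of_isBigO_exp_neg (half_pos ha) ?_ ?_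
  · refine ContinuousOn.mul (by fun_prop) fun x hx => ?_
    exact (continuousAt_rpow_const _ q (Or.inl (by simp at hx; linarith))).comp
      (by fun_prop) |>.continuousWithinAt
  · have hpoly : (fun x : ℝ => (1 + x) ^ q) =O[atTop] fun x => exp (a / 2 * (1 + x)) :=
      ((isLittleO_rpow_exp_pos_mul_atTop q (half_pos ha)).comp_tendsto
        (tendsto_atTop_add_const_left _ 1 tendsto_id)).isBigO
    refine ((isBigO_refl (fun x => exp (-(a * x))) atTop).mul hpoly).trans ?_
    refine (isBigO_const_mul_self (exp (a / 2)) (fun x => exp (-(a / 2) * x)) atTop).congr_left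
      fun x => ?_
    rw [← exp_add, ← exp_add]
    ring_nf

theorem rpow_le_rpow_abs_of_one_le {u v : ℝ} (p : ℝ) (hu : 1 ≤ u) (huv : u ≤ v) :
    u ^ p ≤ v ^ |p| :=
  (rpow_le_rpow_of_exponent_le hu (le_abs_self p)).trans
    (rpow_le_rpow (by linarith) huv (abs_nonneg p))

theorem abs_exp_neg_div_mul_rpow_le {s x y lam : ℝ} (p : ℝ) (hs : 0 ≤ s) (hx : 0 ≤ x)
    (hy : 0 ≤ y) (hlam : 1 ≤ lam) :
    |exp (-s / lam) * ((1 + x / lam) * (1 + y / lam)) ^ p| ≤ (1 + x) ^ |p| * (1 + y) ^ |p| := by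
  have hl : 0 < lam := one_pos.trans_le hlam
  have hx' : 1 ≤ 1 + x / lam := by have := div_nonneg hx hl.le; linarith
  have hy' : 1 ≤ 1 + y / lam := by have := div_nonneg hy hl.le; linarith
  have hexp : exp (-s / lam) ≤ 1 := exp_le_one_iff.mpr (div_nonpos_of_nonpos_of_nonneg
    (neg_nonpos.mpr hs) hl.le)
  have hpow : ((1 + x / lam) * (1 + y / lam)) ^ p ≤ ((1 + x) * (1 + y)) ^ |p| :=
    rpow_le_rpow_abs_of_one_le p (one_le_mul_of_one_le_of_one_le hx' hy')
      (mul_le_mul (by gcongr; exact div_le_self hx hlam) (by gcongr; exact div_le_self hy hlam)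
        (by linarith) (by linarith))
  rw [← mul_rpow (by linarith) (by linarith), abs_of_nonneg (by positivity)]
  calc exp (-s / lam) * ((1 + x / lam) * (1 + y / lam)) ^ p
      ≤ 1 * ((1 + x) * (1 + y)) ^ |p| := mul_le_mul hexp hpow (by positivity) zero_le_one
    _ = ((1 + x) * (1 + y)) ^ |p| := one_mul _

theorem tendsto_exp_neg_div_mul_rpow (s x y p : ℝ) :
    Tendsto (fun lam => exp (-s / lam) * ((1 + x / lam) * (1 + y / lam)) ^ p) atTop (𝓝 1) := by
  have hdiv : ∀ r : ℝ, Tendsto (fun lam : ℝ => r / lam) atTop (𝓝 0) := fun r =>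
    tendsto_const_nhds.div_atTop tendsto_id
  have hbase : Tendsto (fun lam : ℝ => (1 + x / lam) * (1 + y / lam)) atTop (𝓝 1) := by
    simpa using ((hdiv x).const_add 1).mul ((hdiv y).const_add 1)
  have hexp := (continuous_exp.tendsto 0).comp (hdiv (-s))
  have hpow := (continuousAt_rpow_const 1 p (Or.inl one_ne_zero)).tendsto.comp hbase
  simpa using hexp.mul hpow

theorem tendsto_integral_Ioi_Ioi_exp_neg_mul_mul {ι : Type*} {l : Filter ι}
    [l.IsCountablyGenerated] {a b q : ℝ} (ha : 0 < a) (hb : 0 < b) {h : ι → ℝ → ℝ → ℝ}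
    (h_meas : ∀ i, Measurable (Function.uncurry (h i)))
    (h_bound : ∀ᶠ i in l, ∀ x > 0, ∀ y > 0, |h i x y| ≤ (1 + x) ^ q * (1 + y) ^ q)
    (h_lim : ∀ x > 0, ∀ y > 0, Tendsto (fun i => h i x y) l (𝓝 1)) :
    Tendsto (fun i => ∫ x in Ioi 0, ∫ y in Ioi 0, exp (-(a * x)) * exp (-(b * y)) * h i x y) l
      (𝓝 (a⁻¹ * b⁻¹)) := by
  set μ := (volume.restrict (Ioi (0 : ℝ))).prod (volume.restrict (Ioi (0 : ℝ)))
  let F : ι → ℝ × ℝ → ℝ := fun i z => exp (-(a * z.1)) * exp (-(b * z.2)) * h i z.1 z.2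
  let bound : ℝ × ℝ → ℝ := fun z =>
    exp (-(a * z.1)) * (1 + z.1) ^ q * (exp (-(b * z.2)) * (1 + z.2) ^ q)
  have h_pos : ∀ᵐ z ∂μ, 0 < z.1 ∧ 0 < z.2 := by
    rw [show μ = (volume.prod volume).restrict (Ioi 0 ×ˢ Ioi 0) from Measure.prod_restrict _ _]
    exact ae_restrict_of_forall_mem (measurableSet_Ioi.prod measurableSet_Ioi) fun z hz => hz
  have h_int : Integrable bound μ :=
    (integrableOn_Ioi_zero_exp_neg_mul_mul_one_add_rpow ha q).mul_prod
      (integrableOn_Ioi_zero_exp_neg_mul_mul_one_add_rpow hb q)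
  have hF_meas : ∀ i, AEStronglyMeasurable (F i) μ := fun i =>
    (by fun_prop : Measurable fun z : ℝ × ℝ => exp (-(a * z.1)) * exp (-(b * z.2))).mul
      (h_meas i) |>.aestronglyMeasurable
  have hF_bound : ∀ᶠ i in l, ∀ᵐ z ∂μ, ‖F i z‖ ≤ bound z := by
    filter_upwards [h_bound] with i hi
    filter_upwards [h_pos] with z ⟨hx, hy⟩
    rw [norm_mul, norm_of_nonneg (by positivity), Real.norm_eq_abs]
    calc exp (-(a * z.1)) * exp (-(b * z.2)) * |h i z.1 z.2|
        ≤ exp (-(a * z.1)) * exp (-(b * z.2)) * ((1 + z.1) ^ q * (1 + z.2) ^ q) := by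
          gcongr; exact hi _ hx _ hy
      _ = bound z := by ring
  have h_tendsto : Tendsto (fun i => ∫ z, F i z ∂μ) l
      (𝓝 (∫ z, exp (-(a * z.1)) * exp (-(b * z.2)) ∂μ)) := by
    refine tendsto_integral_filter_of_dominated_convergence bound (.of_forall hF_meas) hF_bound
      h_int ?_
    filter_upwards [h_pos] with z ⟨hx, hy⟩
    simpa using (h_lim _ hx _ hy).const_mul (exp (-(a * z.1)) * exp (-(b * z.2)))
  rw [integral_prod_mul (fun x => exp (-(a * x))) (fun y => exp (-(b * y))),
    integral_Ioi_zero_exp_neg_mul ha, integral_Ioi_zero_exp_neg_mul hb] at h_tendsto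
  refine h_tendsto.congr' ?_
  filter_upwards [hF_bound] with i hi
  exact (integral_integral (f := fun x y => exp (-(a * x)) * exp (-(b * y)) * h i x y)
    (h_int.mono' (hF_meas i) hi)).symm

theorem integral_Ioi_one_Ioi_one_exp_quadratic_eq {c ρ lam : ℝ} (p : ℝ) (hlam : 0 < lam) :
    lam ^ 2 * exp (lam * (ρ ^ 2 - 2 * c * ρ + 1)) *
      ∫ t₁ in Ioi 1, ∫ t₂ in Ioi 1,
        exp (-lam * (t₁ ^ 2 - 2 * c * ρ * t₁ * t₂ + ρ ^ 2 * t₂ ^ 2)) * (t₁ * t₂) ^ p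
    = ∫ x in Ioi 0, ∫ y in Ioi 0, exp (-(2 * (1 - c * ρ) * x)) * exp (-(2 * ρ * (ρ - c) * y)) *
        (exp (-(x ^ 2 - 2 * c * ρ * x * y + ρ ^ 2 * y ^ 2) / lam) *
          ((1 + x / lam) * (1 + y / lam)) ^ p) := by
  simp_rw [integral_Ioi_one_eq_inv_smul_integral_Ioi_zero _ hlam, smul_eq_mul,
    integral_const_mul, ← integral_const_mul]
  refine setIntegral_congr_fun measurableSet_Ioi fun x _ =>
    setIntegral_congr_fun measurableSet_Ioi fun y _ => ?_
  have hexp : lam * (ρ ^ 2 - 2 * c * ρ + 1) - lam * ((1 + x / lam) ^ 2 -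
      2 * c * ρ * (1 + x / lam) * (1 + y / lam) + ρ ^ 2 * (1 + y / lam) ^ 2)
      = -(2 * (1 - c * ρ) * x) + -(2 * ρ * (ρ - c) * y) +
        -(x ^ 2 - 2 * c * ρ * x * y + ρ ^ 2 * y ^ 2) / lam := by
    field_simp
    ring
  simp only [← mul_assoc, ← exp_add]
  rw [← hexp, exp_sub, neg_mul, exp_neg]
  field_simp

theorem laplace_double_integral_asymptotic_general (c ρ δ : ℝ) (hc : c ∈ Set.Ioo (0 : ℝ) 1)
    (hρ₁ : c < ρ) (hρ₂ : ρ < 1 / c) :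
    Tendsto
      (fun lam : ℝ =>
        4 * lam ^ 2 * ρ * (ρ - c) * (1 - c * ρ) * Real.exp (lam * (ρ ^ 2 - 2 * c * ρ + 1)) *
          ∫ t₁ in Set.Ioi (1 : ℝ), ∫ t₂ in Set.Ioi (1 : ℝ),
            Real.exp (-lam * (t₁ ^ 2 - 2 * c * ρ * t₁ * t₂ + ρ ^ 2 * t₂ ^ 2)) *
              (t₁ * t₂) ^ (δ + 1/2))
      atTop (nhds 1) := by
  obtain ⟨hc₀, hc₁⟩ := hc
  have hcρ : c * ρ < 1 := by rwa [lt_div_iff₀ hc₀, mul_comm] at hρ₂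
  have ha : 0 < 2 * (1 - c * ρ) := by linarith
  have hb : 0 < 2 * ρ * (ρ - c) := by nlinarith
  have hQ : ∀ x y : ℝ, 0 ≤ x ^ 2 - 2 * c * ρ * x * y + ρ ^ 2 * y ^ 2 := fun x y => by
    nlinarith [sq_nonneg (x - c * ρ * y),
      mul_nonneg (by nlinarith : 0 ≤ 1 - c ^ 2) (sq_nonneg (ρ * y))]
  have hlim := tendsto_integral_Ioi_Ioi_exp_neg_mul_mul ha hb
    (h := fun lam x y => exp (-(x ^ 2 - 2 * c * ρ * x * y + ρ ^ 2 * y ^ 2) / lam) *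
      ((1 + x / lam) * (1 + y / lam)) ^ (δ + 1 / 2))
    (fun lam => by fun_prop)
    ((eventually_ge_atTop 1).mono fun lam hlam x hx y hy =>
      abs_exp_neg_div_mul_rpow_le _ (hQ x y) hx.le hy.le hlam)
    (fun x _ y _ => tendsto_exp_neg_div_mul_rpow _ _ _ _)
  have hscaled := hlim.const_mul (2 * (1 - c * ρ) * (2 * ρ * (ρ - c)))
  rw [← mul_inv, mul_inv_cancel₀ (mul_pos ha hb).ne'] at hscaled
  refine hscaled.congr' ?_
  filter_upwards [eventually_gt_atTop 0] with lam hlam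
  rw [← integral_Ioi_one_Ioi_one_exp_quadratic_eq _ hlam]
  ring

/-- For `c ∈ (0,1)`, `c < ρ < 1/c`, real `δ ≥ -1/2`, with
`I₂(λ) := ∫₁^∞∫₁^∞ e^(-λ(t₁²-2cρt₁t₂+ρ²t₂²)) (t₁t₂)^(δ+1/2) dt₁ dt₂`, one has
`4λ²ρ(ρ-c)(1-cρ) e^(λ(ρ²-2cρ+1)) I₂(λ) → 1` as `λ → +∞`. -/
theorem laplace_double_integral_asymptotic (c ρ δ : ℝ) (hc : c ∈ Set.Ioo (0 : ℝ) 1)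
    (hρ₁ : c < ρ) (hρ₂ : ρ < 1 / c) (hδ : -1/2 ≤ δ) :
    Tendsto
      (fun lam : ℝ =>
        4 * lam ^ 2 * ρ * (ρ - c) * (1 - c * ρ) * Real.exp (lam * (ρ ^ 2 - 2 * c * ρ + 1)) *
          ∫ t₁ in Set.Ioi (1 : ℝ), ∫ t₂ in Set.Ioi (1 : ℝ),
            Real.exp (-lam * (t₁ ^ 2 - 2 * c * ρ * t₁ * t₂ + ρ ^ 2 * t₂ ^ 2)) *
              (t₁ * t₂) ^ (δ + 1/2))
      atTop (nhds 1) :=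
  laplace_double_integral_asymptotic_general c ρ δ hc hρ₁ hρ₂
end

section
/- Let c ∈ (0,1) and let ρ satisfy c < ρ < 1/c. Define S(t₁, t₂) := t₁² − 2cρ t₁ t₂ + ρ² t₂², and for ε > 0 let D_ε := { (t₁, t₂) : t₁ ≥ 1, t₂ ≥ 1, max(t₁ − 1, ρ(t₂ − 1)) ≥ ε }. If 0 < ε < min(ρ/c − 1, 1/c − ρ), then the minimum of S over D_ε is attained and equals min( (1−c²)/c² , (ρ² − 2cρ + 1) + ε·(2·min(ρ−c, 1−cρ) + ε) ). -/
/-!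
In the coordinates `u = t₁`, `v = ρ t₂` the function is the form `u² - 2cuv + v²`, and `D_ε` is the
union of the two quadrants `[1 + ε, ∞) × [ρ, ∞)` and `[1, ∞) × [ρ + ε, ∞)`. On a quadrant whose
corner `(a, b)` satisfies `c a ≤ b` and `c b ≤ a` (both partial derivatives nonnegative there) the
convex form is minimal at the corner, which gives the value `min(S(1 + ε, 1), S(1, 1 + ε/ρ))`. The
term `(1 - c²)/c²` is the value at `(1, 1/(cρ))`, a point of the second quadrant, so it does not
lower the minimum.
-/

def quadForm (c u v : ℝ) : ℝ := u ^ 2 - 2 * c * u * v + v ^ 2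

-- `Q(a + x, b + y) - Q(a, b) = 2x(a - cb) + 2y(b - ca) + (x - y)² + 2(1 - c)xy`.
theorem quadForm_le_quadForm {c a b u v : ℝ} (hc : c ≤ 1) (hab : c * a ≤ b) (hba : c * b ≤ a)
    (hu : a ≤ u) (hv : b ≤ v) : quadForm c a b ≤ quadForm c u v := by
  unfold quadForm
  nlinarith [mul_nonneg (sub_nonneg.2 hu) (sub_nonneg.2 hba),
    mul_nonneg (sub_nonneg.2 hv) (sub_nonneg.2 hab), sq_nonneg (u - a - (v - b)),
    mul_nonneg (mul_nonneg (sub_nonneg.2 hc) (sub_nonneg.2 hu)) (sub_nonneg.2 hv)]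

theorem isLeast_quadForm_image_Ici {c ρ a b : ℝ} (hc : c ≤ 1) (hρ : 0 ≤ ρ)
    (hab : c * a ≤ ρ * b) (hba : c * (ρ * b) ≤ a) :
    IsLeast ((fun p : ℝ × ℝ => quadForm c p.1 (ρ * p.2)) '' Set.Ici (a, b))
      (quadForm c a (ρ * b)) := by
  refine ⟨Set.mem_image_of_mem _ le_rfl, ?_⟩
  rintro _ ⟨p, ⟨hp₁, hp₂⟩, rfl⟩
  exact quadForm_le_quadForm hc hab hba hp₁ (mul_le_mul_of_nonneg_left hp₂ hρ)

theorem setOf_le_max_eq_union_Ici {a b ρ ε : ℝ} (hρ : 0 < ρ) (hε : 0 ≤ ε) :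
    {p : ℝ × ℝ | a ≤ p.1 ∧ b ≤ p.2 ∧ ε ≤ max (p.1 - a) (ρ * (p.2 - b))} =
      Set.Ici (a + ε, b) ∪ Set.Ici (a, b + ε / ρ) := by
  ext ⟨t₁, t₂⟩
  have hscale : ε ≤ ρ * (t₂ - b) ↔ b + ε / ρ ≤ t₂ := by
    rw [← le_sub_iff_add_le', div_le_iff₀' hρ]
  simp only [Set.mem_ofPred_eq, le_max_iff, hscale, Set.mem_union, Set.mem_Ici, Prod.mk_le_mk]
  have hερ := div_nonneg hε hρ.le
  constructor
  · rintro ⟨h₁, h₂, h | h⟩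
    exacts [.inl ⟨by linarith, h₂⟩, .inr ⟨h₁, h⟩]
  · rintro (⟨h₁, h₂⟩ | ⟨h₁, h₂⟩)
    exacts [⟨by linarith, h₂, .inl (by linarith)⟩, ⟨h₁, by linarith, .inr h₂⟩]

theorem min_S_on_D_eps_general (c ρ ε : ℝ) (hc : c ∈ Set.Ioo (0 : ℝ) 1)
    (hρ₁ : c < ρ)
    (hε : 0 < ε) (hε' : ε < min (ρ / c - 1) (1 / c - ρ)) :
    IsLeast
      ((fun p : ℝ × ℝ => p.1 ^ 2 - 2 * c * ρ * p.1 * p.2 + ρ ^ 2 * p.2 ^ 2) ''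
        {p : ℝ × ℝ | 1 ≤ p.1 ∧ 1 ≤ p.2 ∧ ε ≤ max (p.1 - 1) (ρ * (p.2 - 1))})
      (min ((1 - c ^ 2) / c ^ 2)
        ((ρ ^ 2 - 2 * c * ρ + 1) + ε * (2 * min (ρ - c) (1 - c * ρ) + ε))) := by
  obtain ⟨hc0, hc1⟩ := hc
  have hρ0 : 0 < ρ := hc0.trans hρ₁
  have hε₁ : c * (1 + ε) < ρ := by
    have := (lt_min_iff.1 hε').1; rw [lt_sub_iff_add_lt, lt_div_iff₀ hc0] at this; linarith
  have hε₂ : c * (ρ + ε) < 1 := by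
    have := (lt_min_iff.1 hε').2; rw [lt_sub_iff_add_lt, lt_div_iff₀ hc0] at this; linarith
  have hleast := (isLeast_quadForm_image_Ici (a := 1 + ε) (b := 1) hc1.le hρ0.le
    (by linarith) (by nlinarith)).union (isLeast_quadForm_image_Ici (a := 1) (b := 1 + ε / ρ)
    hc1.le hρ0.le (by field_simp; linarith) (by field_simp; linarith))
  have hvalue : min (quadForm c (1 + ε) (ρ * 1)) (quadForm c 1 (ρ * (1 + ε / ρ))) =
      (ρ ^ 2 - 2 * c * ρ + 1) + ε * (2 * min (ρ - c) (1 - c * ρ) + ε) := by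
    have hmono : Monotone fun x => (ρ ^ 2 - 2 * c * ρ + 1) + ε * (2 * x + ε) :=
      fun x y hxy => by dsimp only; gcongr
    rw [hmono.map_min, min_comm]
    unfold quadForm; field_simp; ring_nf
  have hcorner : (1 - c ^ 2) / c ^ 2 = quadForm c 1 (1 / c) := by
    unfold quadForm; field_simp; ring
  have hdominated : quadForm c 1 (ρ * (1 + ε / ρ)) ≤ quadForm c 1 (1 / c) := by
    refine quadForm_le_quadForm hc1.le ?_ ?_ le_rfl ?_ <;> field_simp <;> nlinarith
  have hS : (fun p : ℝ × ℝ => p.1 ^ 2 - 2 * c * ρ * p.1 * p.2 + ρ ^ 2 * p.2 ^ 2) =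
      fun p => quadForm c p.1 (ρ * p.2) := by
    funext p; unfold quadForm; ring
  rw [← hvalue, hcorner, min_eq_right (min_le_right _ _ |>.trans hdominated), hS,
    setOf_le_max_eq_union_Ici hρ0 hε.le, Set.image_union]
  exact hleast

/-- For `c ∈ (0,1)`, `c < ρ < 1/c`, `S(t₁,t₂) := t₁² - 2cρt₁t₂ + ρ²t₂²`,
`D_ε := {(t₁,t₂) : t₁ ≥ 1, t₂ ≥ 1, max(t₁-1, ρ(t₂-1)) ≥ ε}`, and
`0 < ε < min(ρ/c - 1, 1/c - ρ)`, the minimum of `S` over `D_ε` is attained and equals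
`min((1-c²)/c², (ρ²-2cρ+1) + ε(2 min(ρ-c, 1-cρ) + ε))`. -/
theorem min_S_on_D_eps (c ρ ε : ℝ) (hc : c ∈ Set.Ioo (0 : ℝ) 1)
    (hρ₁ : c < ρ) (hρ₂ : ρ < 1 / c)
    (hε : 0 < ε) (hε' : ε < min (ρ / c - 1) (1 / c - ρ)) :
    IsLeast
      ((fun p : ℝ × ℝ => p.1 ^ 2 - 2 * c * ρ * p.1 * p.2 + ρ ^ 2 * p.2 ^ 2) ''
        {p : ℝ × ℝ | 1 ≤ p.1 ∧ 1 ≤ p.2 ∧ ε ≤ max (p.1 - 1) (ρ * (p.2 - 1))})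
      (min ((1 - c ^ 2) / c ^ 2)
        ((ρ ^ 2 - 2 * c * ρ + 1) + ε * (2 * min (ρ - c) (1 - c * ρ) + ε))) :=
  min_S_on_D_eps_general c ρ ε hc hρ₁ hε hε'
end

section
/- Let c ∈ (0,1), ρ > 0, and let δ ≥ −1/2 be real. Then ∫₁^∞ ∫₁^∞ (t₁ t₂)^{δ+1/2} · e^{−(t₁² − 2cρ t₁ t₂ + ρ² t₂²)} dt₁ dt₂ ≤ ρ^{−(δ+3/2)} · ( (2c)^{δ+1/2} √π · Γ(δ+1) / (2(1−c²)^{δ+1}) + 2^{δ−1/2} · Γ(δ/2 + 3/4)² / (2(1−c²)^{δ/2 + 3/4}) ). -/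
/-!
By completing the square, `t₁² - 2cρ t₁t₂ + ρ²t₂² = (ρt₂ - ct₁)² + (1 - c²)t₁²`, so the inner
integral is `e^{-(1-c²)t₁²}` times a moment of a Gaussian centred at `ct₁/ρ`. With `x = ρt₂`,
`m = ct₁` and `μ = δ + 1/2`, splitting at `x = 2m` gives `x^μ ≤ (2m)^μ + 2^μ (x - m)₊^μ`, which
bounds that moment by a full Gaussian integral plus a half-line Gamma integral. What remains in
`t₁` are the two Gamma integrals `∫₀^∞ u^s e^{-(1-c²)u²} du` with `s = 2μ` and `s = μ`.
-/

open Real MeasureTheory Set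

theorem integral_comp_mul_sub {E : Type*} [NormedAddCommGroup E] [NormedSpace ℝ E]
    (g : ℝ → E) {r : ℝ} (hr : 0 < r) (m : ℝ) :
    ∫ t, g (r * t - m) = r⁻¹ • ∫ w, g w := by
  rw [Measure.integral_comp_mul_left (fun s => g (s - m)) r, integral_sub_right_eq_self,
    abs_of_pos (inv_pos.2 hr)]

theorem integral_Ioi_rpow_mul_exp_neg_mul_sq {b s : ℝ} (hb : 0 < b) (hs : -1 < s) :
    ∫ x in Ioi (0 : ℝ), x ^ s * exp (-b * x ^ 2) =
      b ^ (-(s + 1) / 2) * Gamma ((s + 1) / 2) / 2 := by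
  simp_rw [← rpow_two]
  rw [integral_rpow_mul_exp_neg_mul_rpow two_pos hs hb]
  ring

theorem setIntegral_Ioi_rpow_mul_exp_neg_mul_sq_le {b s a : ℝ} (hb : 0 < b) (hs : -1 < s)
    (ha : 0 ≤ a) :
    ∫ x in Ioi a, x ^ s * exp (-b * x ^ 2) ≤ b ^ (-(s + 1) / 2) * Gamma ((s + 1) / 2) / 2 := by
  rw [← integral_Ioi_rpow_mul_exp_neg_mul_sq hb hs]
  refine setIntegral_mono_set (integrableOn_rpow_mul_exp_neg_mul_sq hb hs) ?_
    (Ioi_subset_Ioi ha).eventuallyLE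
  filter_upwards [ae_restrict_mem measurableSet_Ioi] with x (hx : 0 < x)
  positivity

-- `(x - m)₊ ^ μ` is written with an indicator because `0 ^ 0 = 1` for `rpow`.
theorem rpow_le_two_mul_rpow_add_indicator {x m μ : ℝ} (hx : 0 ≤ x) (hm : 0 ≤ m) (hμ : 0 ≤ μ) :
    x ^ μ ≤ (2 * m) ^ μ + 2 ^ μ * (Ioi 0).indicator (· ^ μ) (x - m) := by
  have h_ind : 0 ≤ (Ioi (0 : ℝ)).indicator (· ^ μ) (x - m) :=
    indicator_nonneg (fun w (hw : 0 < w) => rpow_nonneg hw.le μ) _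
  rcases le_or_gt x (2 * m) with hx2 | hx2
  · have := rpow_le_rpow hx hx2 hμ
    have : 0 ≤ (2 : ℝ) ^ μ := by positivity
    nlinarith
  · have hxm : 0 < x - m := by linarith
    calc x ^ μ ≤ (2 * (x - m)) ^ μ := rpow_le_rpow hx (by linarith) hμ
      _ = 2 ^ μ * (Ioi 0).indicator (· ^ μ) (x - m) := by
        rw [indicator_of_mem (show x - m ∈ Ioi 0 from hxm), mul_rpow zero_le_two hxm.le]
      _ ≤ _ := le_add_of_nonneg_left (by positivity)

theorem setIntegral_Ioi_rpow_mul_exp_neg_sq_sub_le {μ r m a : ℝ} (hμ : 0 ≤ μ) (hr : 0 < r)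
    (hm : 0 ≤ m) (ha : 0 ≤ a) :
    ∫ t in Ioi a, (r * t) ^ μ * exp (-(r * t - m) ^ 2) ≤
      r⁻¹ * ((2 * m) ^ μ * √π + 2 ^ μ * (Gamma ((μ + 1) / 2) / 2)) := by
  set φ : ℝ → ℝ := fun w =>
    (2 * m) ^ μ * exp (-w ^ 2) + 2 ^ μ * (Ioi 0).indicator (fun w => w ^ μ * exp (-w ^ 2)) w
  have h_gauss : Integrable fun w : ℝ => exp (-w ^ 2) := by
    simpa using integrable_exp_neg_mul_sq one_pos
  have h_moment : Integrable fun w : ℝ => w ^ μ * exp (-w ^ 2) := by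
    simpa using integrable_rpow_mul_exp_neg_mul_sq one_pos (by linarith : -1 < μ)
  have hφ_int : Integrable φ :=
    (h_gauss.const_mul _).add ((h_moment.indicator measurableSet_Ioi).const_mul _)
  have hφ_nonneg : ∀ w, 0 ≤ φ w := fun w => by
    have : 0 ≤ (Ioi 0).indicator (fun w : ℝ => w ^ μ * exp (-w ^ 2)) w :=
      indicator_nonneg (fun w (hw : 0 < w) => by positivity) _
    positivity
  have hφ_integral : ∫ w, φ w = (2 * m) ^ μ * √π + 2 ^ μ * (Gamma ((μ + 1) / 2) / 2) := by
    rw [integral_add (h_gauss.const_mul _) ((h_moment.indicator measurableSet_Ioi).const_mul _),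
      integral_const_mul, integral_const_mul, integral_indicator measurableSet_Ioi]
    have h1 := integral_gaussian 1
    have h2 := integral_Ioi_rpow_mul_exp_neg_mul_sq one_pos (by linarith : -1 < μ)
    simp only [neg_mul, one_mul, div_one, one_rpow] at h1 h2
    rw [h1, h2]
  have h_pointwise : ∀ t ∈ Ioi a, (r * t) ^ μ * exp (-(r * t - m) ^ 2) ≤ φ (r * t - m) := by
    intro t (ht : a < t)
    have := rpow_le_two_mul_rpow_add_indicator (x := r * t) (by nlinarith) hm hμ
    calc (r * t) ^ μ * exp (-(r * t - m) ^ 2)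
        ≤ ((2 * m) ^ μ + 2 ^ μ * (Ioi 0).indicator (· ^ μ) (r * t - m)) *
          exp (-(r * t - m) ^ 2) := mul_le_mul_of_nonneg_right this (exp_pos _).le
      _ = φ (r * t - m) := by simp only [φ, indicator_mul_left]; ring
  calc ∫ t in Ioi a, (r * t) ^ μ * exp (-(r * t - m) ^ 2)
      ≤ ∫ t in Ioi a, φ (r * t - m) := by
        refine integral_mono_of_nonneg ?_
          ((hφ_int.comp_sub_right m).comp_mul_left' hr.ne').integrableOn ?_
        · filter_upwards [ae_restrict_mem measurableSet_Ioi] with t (ht : a < t)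
          have : 0 ≤ r * t := by nlinarith
          positivity
        · filter_upwards [ae_restrict_mem measurableSet_Ioi] with t ht
          exact h_pointwise t ht
    _ ≤ ∫ t, φ (r * t - m) :=
        setIntegral_le_integral ((hφ_int.comp_sub_right m).comp_mul_left' hr.ne')
          (ae_of_all _ fun t => hφ_nonneg _)
    _ = r⁻¹ * ((2 * m) ^ μ * √π + 2 ^ μ * (Gamma ((μ + 1) / 2) / 2)) := by
        rw [integral_comp_mul_sub φ hr m, hφ_integral, smul_eq_mul]

theorem setIntegral_Ioi_rpow_mul_exp_neg_quadratic_le {c ρ μ u a : ℝ} (hc : 0 ≤ c) (hρ : 0 < ρ)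
    (hμ : 0 ≤ μ) (hu : 0 < u) (ha : 0 ≤ a) :
    ∫ t in Ioi a, (u * t) ^ μ * exp (-(u ^ 2 - 2 * c * ρ * u * t + ρ ^ 2 * t ^ 2)) ≤
      (2 * c) ^ μ * √π / ρ ^ (μ + 1) * (u ^ (2 * μ) * exp (-(1 - c ^ 2) * u ^ 2)) +
        2 ^ μ * (Gamma ((μ + 1) / 2) / 2) / ρ ^ (μ + 1) * (u ^ μ * exp (-(1 - c ^ 2) * u ^ 2)) := by
  have h_complete_square : ∀ t ∈ Ioi a,
      (u * t) ^ μ * exp (-(u ^ 2 - 2 * c * ρ * u * t + ρ ^ 2 * t ^ 2)) =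
        (u / ρ) ^ μ * exp (-(1 - c ^ 2) * u ^ 2) *
          ((ρ * t) ^ μ * exp (-(ρ * t - c * u) ^ 2)) := by
    intro t (ht : a < t)
    have : 0 < t := by linarith
    rw [show u * t = u / ρ * (ρ * t) by field_simp,
      mul_rpow (by positivity) (by positivity),
      show -(u ^ 2 - 2 * c * ρ * u * t + ρ ^ 2 * t ^ 2) =
        -(1 - c ^ 2) * u ^ 2 + -(ρ * t - c * u) ^ 2 by ring, exp_add]
    ring
  rw [setIntegral_congr_fun measurableSet_Ioi h_complete_square, integral_const_mul]
  calc _ ≤ (u / ρ) ^ μ * exp (-(1 - c ^ 2) * u ^ 2) *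
        (ρ⁻¹ * ((2 * (c * u)) ^ μ * √π + 2 ^ μ * (Gamma ((μ + 1) / 2) / 2))) := by
        gcongr
        exact setIntegral_Ioi_rpow_mul_exp_neg_sq_sub_le hμ hρ (by positivity) ha
    _ = _ := by
        rw [div_rpow hu.le hρ.le, ← mul_assoc 2 c u, mul_rpow (by positivity) hu.le, mul_comm 2 μ,
          rpow_mul hu.le, rpow_two, rpow_add_one hρ.ne']
        field_simp

theorem setIntegral_Ioi_setIntegral_Ioi_rpow_mul_exp_neg_quadratic_le {c ρ μ a : ℝ} (hc0 : 0 ≤ c)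
    (hc1 : c < 1) (hρ : 0 < ρ) (hμ : 0 ≤ μ) (ha : 0 ≤ a) :
    ∫ u in Ioi a, ∫ t in Ioi a, (u * t) ^ μ * exp (-(u ^ 2 - 2 * c * ρ * u * t + ρ ^ 2 * t ^ 2)) ≤
      (2 * c) ^ μ * √π / ρ ^ (μ + 1) *
          ((1 - c ^ 2) ^ (-(2 * μ + 1) / 2) * Gamma ((2 * μ + 1) / 2) / 2) +
        2 ^ μ * (Gamma ((μ + 1) / 2) / 2) / ρ ^ (μ + 1) *
          ((1 - c ^ 2) ^ (-(μ + 1) / 2) * Gamma ((μ + 1) / 2) / 2) := by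
  have hb : 0 < 1 - c ^ 2 := by nlinarith
  have h_int : ∀ s : ℝ, -1 < s →
      IntegrableOn (fun u : ℝ => u ^ s * exp (-(1 - c ^ 2) * u ^ 2)) (Ioi a) :=
    fun s hs => (integrableOn_rpow_mul_exp_neg_mul_sq hb hs).mono_set (Ioi_subset_Ioi ha)
  have h_int₁ := h_int (2 * μ) (by linarith)
  have h_int₂ := h_int μ (by linarith)
  set A := (2 * c) ^ μ * √π / ρ ^ (μ + 1)
  set B := 2 ^ μ * (Gamma ((μ + 1) / 2) / 2) / ρ ^ (μ + 1)
  calc _ ≤ ∫ u in Ioi a, (A * (u ^ (2 * μ) * exp (-(1 - c ^ 2) * u ^ 2)) +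
          B * (u ^ μ * exp (-(1 - c ^ 2) * u ^ 2))) := by
        refine integral_mono_of_nonneg ?_ ((h_int₁.const_mul A).add (h_int₂.const_mul B)) ?_
        · filter_upwards [ae_restrict_mem measurableSet_Ioi] with u (hu : a < u)
          refine setIntegral_nonneg measurableSet_Ioi fun t (ht : a < t) => ?_
          have : 0 < u * t := by nlinarith
          positivity
        · filter_upwards [ae_restrict_mem measurableSet_Ioi] with u (hu : a < u)
          exact setIntegral_Ioi_rpow_mul_exp_neg_quadratic_le hc0 hρ hμ (by linarith) ha
    _ = A * (∫ u in Ioi a, u ^ (2 * μ) * exp (-(1 - c ^ 2) * u ^ 2)) +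
          B * ∫ u in Ioi a, u ^ μ * exp (-(1 - c ^ 2) * u ^ 2) := by
        rw [integral_add (h_int₁.const_mul A) (h_int₂.const_mul B), integral_const_mul,
          integral_const_mul]
    _ ≤ _ := by
        have : 0 < Gamma ((μ + 1) / 2) := Gamma_pos_of_pos (by linarith)
        gcongr <;> exact setIntegral_Ioi_rpow_mul_exp_neg_mul_sq_le hb (by linarith) ha

/-- For `c ∈ (0,1)`, `ρ > 0`, real `δ ≥ -1/2`,
`∫₁^∞∫₁^∞ (t₁t₂)^(δ+1/2) e^(-(t₁²-2cρt₁t₂+ρ²t₂²)) dt₁ dt₂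
  ≤ ρ^(-(δ+3/2)) ((2c)^(δ+1/2)√π Γ(δ+1)/(2(1-c²)^(δ+1)) + 2^(δ-1/2) Γ(δ/2+3/4)²/(2(1-c²)^(δ/2+3/4)))`. -/
theorem double_integral_bound (c ρ δ : ℝ) (hc : c ∈ Set.Ioo (0 : ℝ) 1) (hρ : 0 < ρ)
    (hδ : -1/2 ≤ δ) :
    (∫ t₁ in Set.Ioi (1 : ℝ), ∫ t₂ in Set.Ioi (1 : ℝ),
        (t₁ * t₂) ^ (δ + 1/2) * Real.exp (-(t₁ ^ 2 - 2 * c * ρ * t₁ * t₂ + ρ ^ 2 * t₂ ^ 2))) ≤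
      ρ ^ (-(δ + 3/2)) *
        ((2 * c) ^ (δ + 1/2) * Real.sqrt π * Real.Gamma (δ + 1) / (2 * (1 - c ^ 2) ^ (δ + 1)) +
          2 ^ (δ - 1/2) * (Real.Gamma (δ / 2 + 3/4)) ^ 2 / (2 * (1 - c ^ 2) ^ (δ / 2 + 3/4))) := by
  obtain ⟨hc0, hc1⟩ := hc
  have hb : 0 < 1 - c ^ 2 := by nlinarith
  refine (setIntegral_Ioi_setIntegral_Ioi_rpow_mul_exp_neg_quadratic_le hc0.le hc1 hρ
    (by linarith : 0 ≤ δ + 1/2) zero_le_one).trans_eq ?_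
  rw [show (2 * (δ + 1/2) + 1) / 2 = δ + 1 by ring,
    show -(2 * (δ + 1/2) + 1) / 2 = -(δ + 1) by ring,
    show (δ + 1/2 + 1) / 2 = δ / 2 + 3/4 by ring,
    show -(δ + 1/2 + 1) / 2 = -(δ / 2 + 3/4) by ring,
    show δ + 1/2 + 1 = δ + 3/2 by ring, show δ + 1/2 = δ - 1/2 + 1 by ring,
    rpow_add_one two_ne_zero, rpow_neg hb.le, rpow_neg hb.le, rpow_neg hρ.le]
  field_simp
end

section
/- Let δ ≥ −1/2 be real, c ≥ 0, ρ ≥ 0, and t₁ ≥ 0. Then ∫_{ρ − c t₁}^∞ (v + c t₁)^{δ+1/2} e^{−v²} dv ≤ (2 c t₁)^{δ+1/2} · √π + 2^{δ−1/2} · Γ(δ/2 + 3/4). -/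
open Real MeasureTheory Set

/-!
Split the line at `v = k`, where `k = c t₁`: for `v ≤ k` the weight `(v + k) ^ p` is at most
`(2 k) ^ p`, and for `v > k` it is at most `(2 v) ^ p`. Hence `(v + k) ^ p e^{-v²}` is dominated by
`(2 k) ^ p e^{-v²} + 2 ^ p 𝟙_{v > 0} v ^ p e^{-v²}`, a nonnegative function whose integral over
all of `ℝ` is `(2 k) ^ p √π + 2 ^ (p - 1) Γ((p + 1) / 2)`; here `p = δ + 1/2`.
-/

lemma integrableOn_Ioi_rpow_mul_exp_neg_sq {p : ℝ} (hp : -1 < p) :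
    IntegrableOn (fun x : ℝ => x ^ p * exp (-x ^ 2)) (Ioi 0) := by
  simpa only [rpow_two] using integrableOn_rpow_mul_exp_neg_rpow hp two_pos

lemma integral_Ioi_rpow_mul_exp_neg_sq {p : ℝ} (hp : -1 < p) :
    ∫ x in Ioi (0 : ℝ), x ^ p * exp (-x ^ 2) = Gamma ((p + 1) / 2) / 2 := by
  simpa only [rpow_two, one_div, inv_mul_eq_div] using integral_rpow_mul_exp_neg_rpow two_pos hp

lemma rpow_add_le_two_mul_rpow_add_indicator {p k v : ℝ} (hp : 0 ≤ p) (hk : 0 ≤ k)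
    (hvk : 0 ≤ v + k) :
    (v + k) ^ p ≤ (2 * k) ^ p + 2 ^ p * (Ioi 0).indicator (· ^ p) v := by
  rcases le_or_gt v k with hv | hv
  · have : 0 ≤ 2 ^ p * (Ioi 0).indicator (· ^ p) v :=
      mul_nonneg (by positivity) (indicator_nonneg (fun _ hx => rpow_nonneg (le_of_lt hx) _) v)
    linarith [rpow_le_rpow hvk (by linarith : v + k ≤ 2 * k) hp]
  · have hv0 : 0 < v := hk.trans_lt hv
    have : (v + k) ^ p ≤ 2 ^ p * v ^ p := by
      rw [← mul_rpow zero_le_two hv0.le]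
      exact rpow_le_rpow hvk (by linarith) hp
    rw [indicator_of_mem (mem_Ioi.mpr hv0)]
    linarith [rpow_nonneg (by linarith : 0 ≤ 2 * k) p]

noncomputable def shiftedGaussianMajorant (p k v : ℝ) : ℝ :=
  (2 * k) ^ p * exp (-v ^ 2) + 2 ^ p * (Ioi 0).indicator (fun x => x ^ p * exp (-x ^ 2)) v

section shiftedGaussianMajorant

variable {p k : ℝ}

lemma rpow_add_mul_exp_neg_sq_le_shiftedGaussianMajorant {v : ℝ} (hp : 0 ≤ p) (hk : 0 ≤ k)
    (hvk : 0 ≤ v + k) :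
    (v + k) ^ p * exp (-v ^ 2) ≤ shiftedGaussianMajorant p k v := by
  have := mul_le_mul_of_nonneg_right (rpow_add_le_two_mul_rpow_add_indicator hp hk hvk)
    (exp_nonneg (-v ^ 2))
  simpa only [shiftedGaussianMajorant, indicator_mul_left, add_mul, mul_assoc] using this

lemma shiftedGaussianMajorant_nonneg (hk : 0 ≤ k) (v : ℝ) :
    0 ≤ shiftedGaussianMajorant p k v :=
  add_nonneg (mul_nonneg (rpow_nonneg (by linarith) _) (exp_nonneg _))
    (mul_nonneg (by positivity)
      (indicator_nonneg (fun _ hx => mul_nonneg (rpow_nonneg (le_of_lt hx) _) (exp_nonneg _)) v))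

lemma integrable_exp_neg_sq : Integrable fun v : ℝ => exp (-v ^ 2) := by
  simpa using integrable_exp_neg_mul_sq one_pos

lemma integrable_indicator_Ioi_rpow_mul_exp_neg_sq (hp : -1 < p) :
    Integrable ((Ioi 0).indicator fun x : ℝ => x ^ p * exp (-x ^ 2)) :=
  (integrableOn_Ioi_rpow_mul_exp_neg_sq hp).integrable_indicator measurableSet_Ioi

lemma integrable_shiftedGaussianMajorant (hp : -1 < p) :
    Integrable (shiftedGaussianMajorant p k) :=
  (integrable_exp_neg_sq.const_mul _).add
    ((integrable_indicator_Ioi_rpow_mul_exp_neg_sq hp).const_mul _)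

lemma integral_shiftedGaussianMajorant (hp : -1 < p) :
    ∫ v, shiftedGaussianMajorant p k v =
      (2 * k) ^ p * √π + 2 ^ (p - 1) * Gamma ((p + 1) / 2) := by
  have hgauss : ∫ v : ℝ, exp (-v ^ 2) = √π := by simpa using integral_gaussian 1
  unfold shiftedGaussianMajorant
  rw [integral_add (integrable_exp_neg_sq.const_mul _)
      ((integrable_indicator_Ioi_rpow_mul_exp_neg_sq hp).const_mul _),
    integral_const_mul, integral_const_mul, integral_indicator measurableSet_Ioi, hgauss,
    integral_Ioi_rpow_mul_exp_neg_sq hp, rpow_sub_one two_ne_zero, mul_div_assoc']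
  ring

end shiftedGaussianMajorant

theorem setIntegral_Ioi_rpow_add_mul_exp_neg_sq_le {p k a : ℝ} (hp : 0 ≤ p) (hk : 0 ≤ k)
    (hak : 0 ≤ a + k) :
    ∫ v in Ioi a, (v + k) ^ p * exp (-v ^ 2) ≤
      (2 * k) ^ p * √π + 2 ^ (p - 1) * Gamma ((p + 1) / 2) := by
  have hint := integrable_shiftedGaussianMajorant (k := k) (by linarith : -1 < p)
  calc ∫ v in Ioi a, (v + k) ^ p * exp (-v ^ 2)
      ≤ ∫ v in Ioi a, shiftedGaussianMajorant p k v := by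
        refine integral_mono_of_nonneg ?_ hint.integrableOn ?_ <;>
          filter_upwards [ae_restrict_mem measurableSet_Ioi] with v hv
        all_goals have hvk : 0 ≤ v + k := by linarith [mem_Ioi.mp hv]
        · positivity
        · exact rpow_add_mul_exp_neg_sq_le_shiftedGaussianMajorant hp hk hvk
    _ ≤ ∫ v, shiftedGaussianMajorant p k v :=
        setIntegral_le_integral hint
          (Filter.Eventually.of_forall (shiftedGaussianMajorant_nonneg hk))
    _ = _ := integral_shiftedGaussianMajorant (by linarith)

/-- For real `δ ≥ -1/2`, `c ≥ 0`, `ρ ≥ 0`, `t₁ ≥ 0`,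
`∫_{ρ-ct₁}^∞ (v+ct₁)^(δ+1/2) e^(-v²) dv ≤ (2ct₁)^(δ+1/2) √π + 2^(δ-1/2) Γ(δ/2+3/4)`. -/
theorem integral_shifted_power_exp_bound (δ c ρ t₁ : ℝ)
    (hδ : -1/2 ≤ δ) (hc : 0 ≤ c) (hρ : 0 ≤ ρ) (ht₁ : 0 ≤ t₁) :
    (∫ v in Set.Ioi (ρ - c * t₁), (v + c * t₁) ^ (δ + 1/2) * Real.exp (-v ^ 2)) ≤
      (2 * c * t₁) ^ (δ + 1/2) * Real.sqrt π + 2 ^ (δ - 1/2) * Real.Gamma (δ / 2 + 3/4) := by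
  have h := setIntegral_Ioi_rpow_add_mul_exp_neg_sq_le (p := δ + 1/2) (a := ρ - c * t₁)
    (by linarith) (mul_nonneg hc ht₁) (by linarith)
  convert h using 4 <;> ring
end
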